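/- arXiv:2603.10882 — 3 statements merged into one kernel-verified Lean document; each statement's English description precedes it below -/
import Mathlib

section
/- Let v(k) = k / (2|k|^{3/2}) for nonzero k ∈ R². Then for all nonzero k₂, k₃ ∈ R², |v(k₂) − v(k₃)| ≥ |k₂ − k₃| / (2·√(|k₂||k₃|)·(√|k₂| + √|k₃|)). -/
open Real

/-!
Write `a = ‖x‖`, `b = ‖y‖` and `D = a b - ⟪x, y⟫`, which is `≥ 0` by Cauchy–Schwarz. Both sides
expand in `a`, `b`, `D`: `‖x - y‖² = (a - b)² + 2D`, while for the group velocity `v`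
`‖v x - v y‖² · (2√(ab)(√a + √b))² = (a - b)² + 2D (√a + √b)² / √(ab)`.
The bound follows since `(√a + √b)² ≥ √(ab)`.
-/

open scoped RealInnerProductSpace

section

variable {E : Type*} [NormedAddCommGroup E] [InnerProductSpace ℝ E]

theorem norm_smul_sub_smul_sq (c d : ℝ) (x y : E) :
    ‖c • x - d • y‖ ^ 2 = (c * ‖x‖ - d * ‖y‖) ^ 2 + 2 * c * d * (‖x‖ * ‖y‖ - ⟪x, y⟫) := by
  rw [norm_sub_sq_real, norm_smul, norm_smul, real_inner_smul_left, real_inner_smul_right,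
    mul_pow, mul_pow, Real.norm_eq_abs, Real.norm_eq_abs, sq_abs, sq_abs]
  ring

noncomputable def groupVelocity (k : E) : E := (2 * ‖k‖ ^ ((3 : ℝ) / 2))⁻¹ • k

theorem groupVelocity_eq (k : E) : groupVelocity k = (2 * √‖k‖ ^ 3)⁻¹ • k := by
  rw [groupVelocity, rpow_div_two_eq_sqrt _ (norm_nonneg k)]
  norm_cast

theorem norm_groupVelocity_sub_sq_mul {x y : E} (hx : x ≠ 0) (hy : y ≠ 0) :
    ‖groupVelocity x - groupVelocity y‖ ^ 2 * (2 * √‖x‖ * √‖y‖ * (√‖x‖ + √‖y‖)) ^ 2 =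
      (‖x‖ - ‖y‖) ^ 2 +
        2 * (‖x‖ * ‖y‖ - ⟪x, y⟫) * (√‖x‖ + √‖y‖) ^ 2 / (√‖x‖ * √‖y‖) := by
  rw [groupVelocity_eq, groupVelocity_eq, norm_smul_sub_smul_sq]
  have hs : 0 < √‖x‖ := sqrt_pos.mpr (norm_pos_iff.mpr hx)
  have ht : 0 < √‖y‖ := sqrt_pos.mpr (norm_pos_iff.mpr hy)
  have ha : ‖x‖ = √‖x‖ ^ 2 := (sq_sqrt (norm_nonneg x)).symm
  have hb : ‖y‖ = √‖y‖ ^ 2 := (sq_sqrt (norm_nonneg y)).symm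
  generalize √‖x‖ = s at *
  generalize √‖y‖ = t at *
  rw [ha, hb]
  field_simp
  ring

theorem norm_sub_le_mul_norm_groupVelocity_sub {x y : E} (hx : x ≠ 0) (hy : y ≠ 0) :
    ‖x - y‖ ≤ ‖groupVelocity x - groupVelocity y‖ * (2 * √‖x‖ * √‖y‖ * (√‖x‖ + √‖y‖)) := by
  have hs : 0 < √‖x‖ := sqrt_pos.mpr (norm_pos_iff.mpr hx)
  have ht : 0 < √‖y‖ := sqrt_pos.mpr (norm_pos_iff.mpr hy)
  have hD : 0 ≤ ‖x‖ * ‖y‖ - ⟪x, y⟫ := sub_nonneg.mpr (real_inner_le_norm x y)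
  have hratio : 1 ≤ (√‖x‖ + √‖y‖) ^ 2 / (√‖x‖ * √‖y‖) := by
    rw [one_le_div (by positivity)]
    nlinarith
  refine le_of_sq_le_sq ?_ (by positivity)
  calc ‖x - y‖ ^ 2 = (‖x‖ - ‖y‖) ^ 2 + 2 * (‖x‖ * ‖y‖ - ⟪x, y⟫) := by
        simpa using norm_smul_sub_smul_sq 1 1 x y
    _ ≤ (‖x‖ - ‖y‖) ^ 2 +
          2 * (‖x‖ * ‖y‖ - ⟪x, y⟫) * (√‖x‖ + √‖y‖) ^ 2 / (√‖x‖ * √‖y‖) := by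
        rw [mul_div_assoc]
        nlinarith
    _ = _ := by rw [mul_pow, norm_groupVelocity_sub_sq_mul hx hy]

end

theorem group_velocity_lower_bound
    (k₂ k₃ : EuclideanSpace ℝ (Fin 2)) (h₂ : k₂ ≠ 0) (h₃ : k₃ ≠ 0) :
    ‖(2 * ‖k₂‖ ^ ((3:ℝ)/2))⁻¹ • k₂ - (2 * ‖k₃‖ ^ ((3:ℝ)/2))⁻¹ • k₃‖ ≥
      ‖k₂ - k₃‖ / (2 * Real.sqrt (‖k₂‖ * ‖k₃‖) * (Real.sqrt ‖k₂‖ + Real.sqrt ‖k₃‖)) := by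
  have hden : 0 < 2 * √‖k₂‖ * √‖k₃‖ * (√‖k₂‖ + √‖k₃‖) := by
    have ha : 0 < ‖k₂‖ := norm_pos_iff.mpr h₂
    have hb : 0 < ‖k₃‖ := norm_pos_iff.mpr h₃
    positivity
  rw [sqrt_mul (norm_nonneg _), ← mul_assoc, ge_iff_le, div_le_iff₀ hden]
  exact norm_sub_le_mul_norm_groupVelocity_sub h₂ h₃
end

section
/- Let k, k₁, k₂, k₃ ∈ R^d \ {0} satisfy k + k₁ = k₂ + k₃, the resonance condition √|k| + √|k₁| = √|k₂| + √|k₃|, and the scale separations 20|k₁| ≤ |k₃|, 20|k₂| ≤ |k₃|. Writing ω_j = √|k_j| and ω = √|k|, one has |ω₁ − ω₂| = |ω − ω₃| ≤ (3/5)·|k₂ − k₁|/ω₃. -/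
/-!
Subtracting `ω + ω₂` from the resonance condition gives `ω₁ - ω₂ = ω₃ - ω`, and momentum
conservation gives `k - k₃ = k₂ - k₁`, so `||k| - |k₃|| ≤ |k₂ - k₁| ≤ |k₁| + |k₂| ≤ |k₃| / 10`.
Rationalising, `|ω - ω₃| = ||k| - |k₃|| / (ω + ω₃)`, and `|k| ≥ (9/10)|k₃|` forces
`ω ≥ (2/3) ω₃`, hence `ω + ω₃ ≥ (5/3) ω₃`.
-/

open Real

theorem abs_sqrt_sub_sqrt_mul_add {x y : ℝ} (hx : 0 ≤ x) (hy : 0 ≤ y) :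
    |√x - √y| * (√x + √y) = |x - y| := by
  rw [← abs_of_nonneg (by positivity : 0 ≤ √x + √y), ← abs_mul, ← sq_sqrt hx, ← sq_sqrt hy]
  simp only [sqrt_sq (sqrt_nonneg _)]
  ring_nf

theorem abs_sqrt_sub_sqrt_le_of_abs_sub_le {x y δ : ℝ} (hx : 0 ≤ x) (hy : 0 < y)
    (hxy : |x - y| ≤ δ) (hδ : 10 * δ ≤ y) :
    |√x - √y| ≤ (3 / 5) * δ / √y := by
  have hy' : 0 < √y := sqrt_pos.mpr hy
  have hx_large : (9 / 10) * y ≤ x := by linarith [(abs_le.mp hxy).1]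
  -- `(2/3)² < 9/10`
  have hsqrt_large : (2 / 3) * √y ≤ √x := by
    rw [le_sqrt (by positivity) hx, mul_pow, sq_sqrt hy.le]
    linarith
  rw [le_div_iff₀ hy']
  calc |√x - √y| * √y ≤ |√x - √y| * ((3 / 5) * (√x + √y)) := by
        gcongr; linarith
    _ = (3 / 5) * |x - y| := by rw [← abs_sqrt_sub_sqrt_mul_add hx hy.le]; ring
    _ ≤ (3 / 5) * δ := by gcongr

theorem abs_norm_sub_norm_le_of_add_eq_add {E : Type*} [SeminormedAddCommGroup E]
    {k k₁ k₂ k₃ : E} (h : k + k₁ = k₂ + k₃) :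
    |‖k‖ - ‖k₃‖| ≤ ‖k₂ - k₁‖ := by
  rw [← sub_eq_sub_iff_add_eq_add.mpr h]
  exact abs_norm_sub_norm_le k k₃

theorem freq_difference_estimate_general (d : ℕ) (k k₁ k₂ k₃ : EuclideanSpace ℝ (Fin d))
    (hk₃ : k₃ ≠ 0)
    (hcons : k + k₁ = k₂ + k₃)
    (hΩ : Real.sqrt ‖k‖ + Real.sqrt ‖k₁‖ = Real.sqrt ‖k₂‖ + Real.sqrt ‖k₃‖)
    (h₁ : 20 * ‖k₁‖ ≤ ‖k₃‖) (h₂ : 20 * ‖k₂‖ ≤ ‖k₃‖) :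
    |Real.sqrt ‖k₁‖ - Real.sqrt ‖k₂‖| = |Real.sqrt ‖k‖ - Real.sqrt ‖k₃‖| ∧
      |Real.sqrt ‖k‖ - Real.sqrt ‖k₃‖| ≤ (3/5) * ‖k₂ - k₁‖ / Real.sqrt ‖k₃‖ := by
  refine ⟨?_, abs_sqrt_sub_sqrt_le_of_abs_sub_le (norm_nonneg k) (norm_pos_iff.mpr hk₃)
    (abs_norm_sub_norm_le_of_add_eq_add hcons) ?_⟩
  · rw [abs_sub_comm √‖k‖]
    congr 1
    linarith
  · linarith [norm_sub_le k₂ k₁]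

theorem freq_difference_estimate (d : ℕ) (k k₁ k₂ k₃ : EuclideanSpace ℝ (Fin d))
    (hk : k ≠ 0) (hk₁ : k₁ ≠ 0) (hk₂ : k₂ ≠ 0) (hk₃ : k₃ ≠ 0)
    (hcons : k + k₁ = k₂ + k₃)
    (hΩ : Real.sqrt ‖k‖ + Real.sqrt ‖k₁‖ = Real.sqrt ‖k₂‖ + Real.sqrt ‖k₃‖)
    (h₁ : 20 * ‖k₁‖ ≤ ‖k₃‖) (h₂ : 20 * ‖k₂‖ ≤ ‖k₃‖) :
    |Real.sqrt ‖k₁‖ - Real.sqrt ‖k₂‖| = |Real.sqrt ‖k‖ - Real.sqrt ‖k₃‖| ∧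
      |Real.sqrt ‖k‖ - Real.sqrt ‖k₃‖| ≤ (3/5) * ‖k₂ - k₁‖ / Real.sqrt ‖k₃‖ :=
  freq_difference_estimate_general d k k₁ k₂ k₃ hk₃ hcons hΩ h₁ h₂
end

section
/- Let k, k₁, k₂, k₃ ∈ R^d \ {0} satisfy k + k₁ = k₂ + k₃, the resonance √|k| + √|k₁| = √|k₂| + √|k₃|, and 20|k₁| ≤ |k₃|, 20|k₂| ≤ |k₃|. Then |1/|k|^{1/4} − 1/|k₃|^{1/4}| ≤ (2/5)·|k₂ − k₁|/|k₃|^{5/4}. -/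
/-! With x = ‖k‖^(1/4) and y = ‖k₃‖^(1/4) one has 1/x - 1/y = (y⁴ - x⁴) / (x y (x + y) (x² + y²)),
and |y⁴ - x⁴| = |‖k₃‖ - ‖k‖| ≤ ‖k₂ - k₁‖ by momentum conservation. The resonance with
20‖k₁‖ ≤ ‖k₃‖ gives √‖k‖ ≥ (3/4)√‖k₃‖, so x ≥ (43/50) y, and then the denominator is at least
(5/2) y⁵. -/

open Real

lemma rpow_one_div_four_pow (n : ℕ) {a : ℝ} (ha : 0 ≤ a) :
    (a ^ ((1 : ℝ) / 4)) ^ n = a ^ ((n : ℝ) / 4) := by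
  rw [← rpow_mul_natCast ha]
  ring_nf

lemma nine_sixteenths_le_of_sqrt_add_eq {a a₁ a₂ b : ℝ} (ha : 0 ≤ a) (hb : 0 ≤ b)
    (h : √a + √a₁ = √a₂ + √b) (h₁ : 16 * a₁ ≤ b) : 9 / 16 * b ≤ a := by
  have h₁' : 4 * √a₁ ≤ √b := by
    calc 4 * √a₁ = √(4 ^ 2 * a₁) := by rw [sqrt_mul (by positivity), sqrt_sq (by norm_num)]
      _ ≤ √b := sqrt_le_sqrt (by linarith)
  have hsqrt : 3 / 4 * √b ≤ √a := by linarith [sqrt_nonneg a₂]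
  calc 9 / 16 * b = (3 / 4 * √b) ^ 2 := by rw [mul_pow, sq_sqrt hb]; norm_num
    _ ≤ √a ^ 2 := by gcongr
    _ = a := sq_sqrt ha

lemma one_div_sub_one_div_mul_eq {x y : ℝ} (hx : x ≠ 0) (hy : y ≠ 0) :
    (1 / x - 1 / y) * (x * y * (x + y) * (x ^ 2 + y ^ 2)) = y ^ 4 - x ^ 4 := by
  field_simp
  ring

lemma pow_five_le_of_le_mul {x y : ℝ} (hy : 0 ≤ y) (h : 43 / 50 * y ≤ x) :
    y ^ 5 ≤ 2 / 5 * (x * y * (x + y) * (x ^ 2 + y ^ 2)) := by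
  have hx : 0 ≤ x := by linarith
  have hmono : 43 / 50 * y * y * (43 / 50 * y + y) * ((43 / 50 * y) ^ 2 + y ^ 2) ≤
      x * y * (x + y) * (x ^ 2 + y ^ 2) := by
    gcongr
  nlinarith [pow_nonneg hy 5]

lemma abs_one_div_rpow_quarter_sub_le {a b : ℝ} (hb : 0 < b) (hab : 9 / 16 * b ≤ a) :
    |1 / a ^ ((1 : ℝ) / 4) - 1 / b ^ ((1 : ℝ) / 4)| ≤
      2 / 5 * |a - b| / b ^ ((5 : ℝ) / 4) := by
  have ha : 0 < a := by linarith
  have hx4 : (a ^ ((1 : ℝ) / 4)) ^ 4 = a := by rw [rpow_one_div_four_pow 4 ha.le]; norm_num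
  have hy4 : (b ^ ((1 : ℝ) / 4)) ^ 4 = b := by rw [rpow_one_div_four_pow 4 hb.le]; norm_num
  have hy5 : (b ^ ((1 : ℝ) / 4)) ^ 5 = b ^ ((5 : ℝ) / 4) := by
    rw [rpow_one_div_four_pow 5 hb.le]; norm_num
  set x := a ^ ((1 : ℝ) / 4)
  set y := b ^ ((1 : ℝ) / 4)
  have hx : 0 < x := rpow_pos_of_pos ha _
  have hy : 0 < y := rpow_pos_of_pos hb _
  have hxy : 43 / 50 * y ≤ x := by
    apply le_of_pow_le_pow_left₀ (n := 4) (by norm_num) hx.le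
    rw [mul_pow, hx4, hy4]
    linarith
  set Q := x * y * (x + y) * (x ^ 2 + y ^ 2)
  have hQ : 0 < Q := by positivity
  have hdiff : |1 / x - 1 / y| = |a - b| / Q := by
    rw [eq_div_iff hQ.ne', ← abs_of_pos hQ, ← abs_mul,
      one_div_sub_one_div_mul_eq hx.ne' hy.ne', hx4, hy4, abs_sub_comm]
  rw [hdiff, ← hy5, div_le_div_iff₀ hQ (by positivity)]
  nlinarith [pow_five_le_of_le_mul hy.le hxy, abs_nonneg (a - b)]

theorem fourth_root_difference_estimate_general (d : ℕ) (k k₁ k₂ k₃ : EuclideanSpace ℝ (Fin d))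
    (hk₃ : k₃ ≠ 0)
    (hcons : k + k₁ = k₂ + k₃)
    (hΩ : Real.sqrt ‖k‖ + Real.sqrt ‖k₁‖ = Real.sqrt ‖k₂‖ + Real.sqrt ‖k₃‖)
    (h₁ : 20 * ‖k₁‖ ≤ ‖k₃‖) :
    |1 / ‖k‖ ^ ((1:ℝ)/4) - 1 / ‖k₃‖ ^ ((1:ℝ)/4)| ≤
      (2/5) * ‖k₂ - k₁‖ / ‖k₃‖ ^ ((5:ℝ)/4) := by
  have hk₃pos : 0 < ‖k₃‖ := norm_pos_iff.mpr hk₃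
  have hnorm : 9 / 16 * ‖k₃‖ ≤ ‖k‖ :=
    nine_sixteenths_le_of_sqrt_add_eq (norm_nonneg _) hk₃pos.le hΩ
      (by linarith [norm_nonneg k₁])
  have hgap : |‖k‖ - ‖k₃‖| ≤ ‖k₂ - k₁‖ := by
    rw [← sub_eq_sub_iff_add_eq_add.mpr hcons]
    exact abs_norm_sub_norm_le k k₃
  calc _ ≤ 2 / 5 * |‖k‖ - ‖k₃‖| / ‖k₃‖ ^ ((5 : ℝ) / 4) :=
        abs_one_div_rpow_quarter_sub_le hk₃pos hnorm
    _ ≤ _ := by gcongr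

theorem fourth_root_difference_estimate (d : ℕ) (k k₁ k₂ k₃ : EuclideanSpace ℝ (Fin d))
    (hk : k ≠ 0) (hk₁ : k₁ ≠ 0) (hk₂ : k₂ ≠ 0) (hk₃ : k₃ ≠ 0)
    (hcons : k + k₁ = k₂ + k₃)
    (hΩ : Real.sqrt ‖k‖ + Real.sqrt ‖k₁‖ = Real.sqrt ‖k₂‖ + Real.sqrt ‖k₃‖)
    (h₁ : 20 * ‖k₁‖ ≤ ‖k₃‖) (h₂ : 20 * ‖k₂‖ ≤ ‖k₃‖) :
    |1 / ‖k‖ ^ ((1:ℝ)/4) - 1 / ‖k₃‖ ^ ((1:ℝ)/4)| ≤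
      (2/5) * ‖k₂ - k₁‖ / ‖k₃‖ ^ ((5:ℝ)/4) :=
  fourth_root_difference_estimate_general d k k₁ k₂ k₃ hk₃ hcons hΩ h₁
end
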